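/- Let (ξ, J) be a Levi flat structure on L with defining couple (γ, X), α ∈ Z¹(L) satisfying the Maurer–Cartan equation, and [·,·]_α the deformed bracket [V,W]_α = [V,W] + (α ∧ T)(V,W). Then the Nijenhuis tensor of J with respect to [·,·]_α satisfies N_J^α = −4 α_J^{0,1} ∧ H, where H(V) = ½(T(V) + J T(JV)) and α^{0,1}(V) = ½(α(V) + i α(JV)), i.e. for sections V, W of ξ: N_J^α(V,W) = −2( α(V) HW − α(W) HV + α(JV) JHW − α(JW) JHV ). -/

import Mathlib

/-!
The deformed bracket is `[·,·] + α ∧ T` and the Nijenhuis tensor is additive in the bracket, so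
`N_J^α = N_J + N_J(α ∧ T)` with `N_J = 0` on `ξ`. Since `T` takes values in `ξ = ker γ`, where
`J² = -1`, expanding `N_J(α ∧ T)` and collecting the terms in `α(V), α(W), α(JV), α(JW)` gives
`-2` times the stated combination of `H`.
-/

section Nijenhuis

variable {R g : Type*} [CommRing R] [AddCommGroup g] [Module R g]

def nijenhuis (J : g →ₗ[R] g) (b : g → g → g) (v w : g) : g :=
  b (J v) (J w) - b v w - J (b (J v) w) - J (b v (J w))

theorem nijenhuis_add (J : g →ₗ[R] g) (b₁ b₂ : g → g → g) (v w : g) :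
    nijenhuis J (fun v w => b₁ v w + b₂ v w) v w = nijenhuis J b₁ v w + nijenhuis J b₂ v w := by
  simp only [nijenhuis, map_add]
  abel

theorem nijenhuis_wedge (J : g →ₗ[R] g) (α : g →ₗ[R] R) (T : g → g)
    (hJT : ∀ v, J (J (T v)) = -T v) (v w : g) :
    nijenhuis J (fun v w => α v • T w - α w • T v) v w
      = -(α v • (T w + J (T (J w))) - α w • (T v + J (T (J v)))
          + α (J v) • J (T w + J (T (J w))) - α (J w) • J (T v + J (T (J v)))) := by
  simp only [nijenhuis, map_add, map_sub, map_smul, hJT]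
  module

theorem apply_sub_apply_smul_of_apply_eq_one {γ : g →ₗ[R] R} {X : g} (hX : γ X = 1) (u : g) :
    γ (u - γ u • X) = 0 := by
  simp [hX]

end Nijenhuis

theorem stmt_16_general {R : Type*} [CommRing R] [Algebra ℝ R]
    {g : Type*} [AddCommGroup g] [Module ℝ g] [Module R g] [IsScalarTower ℝ R g]
    (bracket : g → g → g)
    (γ α : g →ₗ[R] R) (X : g) (hX : γ X = 1)
    (J : g →ₗ[R] g)
    (hJ2 : ∀ v, γ v = 0 → J (J v) = -v)
    (T : g → g) (hT : ∀ v, T v = bracket v X - γ (bracket v X) • X)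
    (H : g → g) (hH : ∀ v, H v = (2 : ℝ)⁻¹ • (T v + J (T (J v))))
    (bracketα : g → g → g)
    (hbα : ∀ v w, bracketα v w = bracket v w + α v • T w - α w • T v)
    -- vanishing of the Nijenhuis tensor of J for the Lie bracket [·,·]
    (hN : ∀ v w, γ v = 0 → γ w = 0 →
        bracket (J v) (J w) - bracket v w - J (bracket (J v) w) - J (bracket v (J w)) = 0)
    (V W : g) (hV : γ V = 0) (hW : γ W = 0) :
    bracketα (J V) (J W) - bracketα V W - J (bracketα (J V) W) - J (bracketα V (J W))
      = (-2 : ℝ) • (α V • H W - α W • H V + α (J V) • J (H W) - α (J W) • J (H V)) := by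
  have hJT : ∀ v, J (J (T v)) = -T v := fun v =>
    hJ2 _ (by rw [hT]; exact apply_sub_apply_smul_of_apply_eq_one hX _)
  have hbα' : bracketα = fun v w => bracket v w + (α v • T w - α w • T v) := by
    funext v w
    rw [hbα, add_sub_assoc]
  calc nijenhuis J bracketα V W
      = nijenhuis J bracket V W + nijenhuis J (fun v w => α v • T w - α w • T v) V W := by
        rw [hbα', nijenhuis_add]
    _ = -(α V • (T W + J (T (J W))) - α W • (T V + J (T (J V)))
          + α (J V) • J (T W + J (T (J W))) - α (J W) • J (T V + J (T (J V)))) := by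
        rw [show nijenhuis J bracket V W = 0 from hN V W hV hW, zero_add, nijenhuis_wedge J α T hJT]
    _ = _ := by
        have hH2 : ∀ v, T v + J (T (J v)) = (2 : ℝ) • H v := fun v => by
          rw [hH, smul_inv_smul₀ two_ne_zero]
        simp only [hH2, LinearMap.map_smul_of_tower]
        module

/-- With the deformed bracket [V,W]_α = [V,W] + α(V)T(W) − α(W)T(V),
T(V) = [V,X] − γ([V,X])X, H(V) = ½(T(V) + J T(JV)) and N_J = 0 on ξ, the Nijenhuis
tensor of J with respect to [·,·]_α satisfies, for sections V, W of ξ: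
N_J^α(V,W) = −2( α(V) HW − α(W) HV + α(JV) JHW − α(JW) JHV ). -/
theorem stmt_16 {R : Type*} [CommRing R] [Algebra ℝ R]
    {g : Type*} [AddCommGroup g] [Module ℝ g] [Module R g] [IsScalarTower ℝ R g]
    (bracket : g → g → g)
    (γ α : g →ₗ[R] R) (X : g) (hX : γ X = 1) (hαX : α X = 0)
    (J : g →ₗ[R] g)
    (hJ2 : ∀ v, γ v = 0 → J (J v) = -v)
    (hJξ : ∀ v, γ v = 0 → γ (J v) = 0)
    (T : g → g) (hT : ∀ v, T v = bracket v X - γ (bracket v X) • X)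
    (H : g → g) (hH : ∀ v, H v = (2 : ℝ)⁻¹ • (T v + J (T (J v))))
    (bracketα : g → g → g)
    (hbα : ∀ v w, bracketα v w = bracket v w + α v • T w - α w • T v)
    -- vanishing of the Nijenhuis tensor of J for the Lie bracket [·,·]
    (hN : ∀ v w, γ v = 0 → γ w = 0 →
        bracket (J v) (J w) - bracket v w - J (bracket (J v) w) - J (bracket v (J w)) = 0)
    (V W : g) (hV : γ V = 0) (hW : γ W = 0) :
    bracketα (J V) (J W) - bracketα V W - J (bracketα (J V) W) - J (bracketα V (J W))
      = (-2 : ℝ) • (α V • H W - α W • H V + α (J V) • J (H W) - α (J W) • J (H V)) :=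
  stmt_16_general bracket γ α X hX J hJ2 T hT H hH bracketα hbα hN V W hV hW
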